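/- Fix d ≥ 2 and let μ be a Borel probability measure on ℝ^d absolutely continuous with respect to Lebesgue measure. Let X ⊆ ℝ^d have nonempty interior and let u = (u_1, u_2) ∈ Δ² with u_1 > 0 and u_2 > 0. Then there exist x^{(1)}, x^{(2)} ∈ X such that μ({θ ∈ ℝ^d : ⟨θ, x^{(1)}⟩ ≥ ⟨θ, x^{(2)}⟩}) = u_1 and μ({θ ∈ ℝ^d : ⟨θ, x^{(2)}⟩ > ⟨θ, x^{(1)}⟩}) = u_2 if and only if max(u_1, u_2) ≤ 1 − δ(μ). -/

import Mathlib

open MeasureTheory Set Metric Filter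
open scoped RealInnerProductSpace Topology

/-- Halfspace depth of the origin: δ(μ) = inf over v ≠ 0 of μ({θ : ⟨θ,v⟩ ≥ 0}). -/
noncomputable def depth {d : ℕ} (μ : Measure (EuclideanSpace ℝ (Fin d))) : ℝ :=
  sInf {r | ∃ v : EuclideanSpace ℝ (Fin d), v ≠ 0 ∧
    r = (μ {θ | 0 ≤ ⟪θ, v⟫}).toReal}

variable {d : ℕ}

noncomputable def fval (μ : Measure (EuclideanSpace ℝ (Fin d)))
    (v : EuclideanSpace ℝ (Fin d)) : ℝ :=
  (μ {θ | 0 ≤ ⟪θ, v⟫}).toReal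

lemma cont_inner (v : EuclideanSpace ℝ (Fin d)) :
    Continuous (fun θ : EuclideanSpace ℝ (Fin d) => ⟪θ, v⟫) :=
  Continuous.inner continuous_id continuous_const



lemma measurableSet_H (v : EuclideanSpace ℝ (Fin d)) :
    MeasurableSet {θ : EuclideanSpace ℝ (Fin d) | 0 ≤ ⟪θ, v⟫} :=
  (isClosed_le continuous_const (cont_inner v)).measurableSet

lemma hyperplane_null (μ : Measure (EuclideanSpace ℝ (Fin d)))
    (hac : μ ≪ volume) {v : EuclideanSpace ℝ (Fin d)} (hv : v ≠ 0) :
    μ {θ | ⟪θ, v⟫ = 0} = 0 := by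
  apply hac
  have h : {θ : EuclideanSpace ℝ (Fin d) | ⟪θ, v⟫ = 0}
      = (LinearMap.ker (innerSL ℝ v : EuclideanSpace ℝ (Fin d) →ₗ[ℝ] ℝ) : Set (EuclideanSpace ℝ (Fin d))) := by
    ext θ
    simp only [mem_setOf_eq, SetLike.mem_coe, LinearMap.mem_ker,
      ContinuousLinearMap.coe_coe, innerSL_apply_apply]
    exact ⟨fun h => by rw [real_inner_comm]; exact h, fun h => by rw [real_inner_comm]; exact h⟩
  rw [h]
  apply Measure.addHaar_submodule
  intro htop
  apply hv
  have hvmem : v ∈ LinearMap.ker (innerSL ℝ v : EuclideanSpace ℝ (Fin d) →ₗ[ℝ] ℝ) := by rw [htop]; trivial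
  have : ⟪v, v⟫ = 0 := hvmem
  exact inner_self_eq_zero.mp this

lemma measure_strict_eq (μ : Measure (EuclideanSpace ℝ (Fin d)))
    (hac : μ ≪ volume) {v : EuclideanSpace ℝ (Fin d)} (hv : v ≠ 0) :
    μ {θ | 0 < ⟪θ, v⟫} = μ {θ | 0 ≤ ⟪θ, v⟫} := by
  refine le_antisymm (measure_mono fun θ (h : (0:ℝ) < _) => le_of_lt h) ?_
  calc μ {θ | 0 ≤ ⟪θ, v⟫}
      ≤ μ ({θ | 0 < ⟪θ, v⟫} ∪ {θ | ⟪θ, v⟫ = 0}) := by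
        apply measure_mono
        intro θ h
        rcases lt_or_eq_of_le (show (0:ℝ) ≤ ⟪θ, v⟫ from h) with h' | h'
        · exact Or.inl h'
        · exact Or.inr h'.symm
    _ ≤ μ {θ | 0 < ⟪θ, v⟫} + μ {θ | ⟪θ, v⟫ = 0} := measure_union_le _ _
    _ = μ {θ | 0 < ⟪θ, v⟫} := by rw [hyperplane_null μ hac hv, add_zero]

lemma fval_add_neg (μ : Measure (EuclideanSpace ℝ (Fin d))) [IsProbabilityMeasure μ]
    (hac : μ ≪ volume) {v : EuclideanSpace ℝ (Fin d)} (hv : v ≠ 0) :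
    fval μ v + fval μ (-v) = 1 := by
  have hneg : {θ : EuclideanSpace ℝ (Fin d) | 0 ≤ ⟪θ, -v⟫} = {θ | ⟪θ, v⟫ ≤ 0} := by
    ext θ; simp [inner_neg_right, neg_nonneg]
  have hunion : {θ : EuclideanSpace ℝ (Fin d) | 0 ≤ ⟪θ, v⟫} ∪ {θ | ⟪θ, v⟫ ≤ 0} = univ := by
    ext θ; simp [le_total]
  have hinter : {θ : EuclideanSpace ℝ (Fin d) | 0 ≤ ⟪θ, v⟫} ∩ {θ | ⟪θ, v⟫ ≤ 0}
      = {θ | ⟪θ, v⟫ = 0} := by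
    ext θ; simp only [mem_inter_iff, mem_setOf_eq]
    constructor
    · rintro ⟨h1, h2⟩; exact le_antisymm h2 h1
    · intro h; exact ⟨le_of_eq h.symm, le_of_eq h⟩
  have key : μ {θ | 0 ≤ ⟪θ, v⟫} + μ {θ | ⟪θ, v⟫ ≤ 0} = 1 := by
    have hm : MeasurableSet {θ : EuclideanSpace ℝ (Fin d) | ⟪θ, v⟫ ≤ 0} :=
      (isClosed_le (cont_inner v) continuous_const).measurableSet
    have := measure_union_add_inter (μ := μ) {θ | 0 ≤ ⟪θ, v⟫} hm
    rw [hunion, hinter, hyperplane_null μ hac hv, add_zero, measure_univ] at this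
    exact this.symm
  unfold fval
  rw [hneg]
  rw [← ENNReal.toReal_add (measure_ne_top μ _) (measure_ne_top μ _), key, ENNReal.toReal_one]

lemma fval_smul (μ : Measure (EuclideanSpace ℝ (Fin d)))
    {c : ℝ} (hc : 0 < c) (v : EuclideanSpace ℝ (Fin d)) :
    fval μ (c • v) = fval μ v := by
  unfold fval
  congr 1
  congr 1
  ext θ
  simp only [mem_setOf_eq, real_inner_smul_right]
  exact mul_nonneg_iff_of_pos_left hc

lemma fval_continuousAt (μ : Measure (EuclideanSpace ℝ (Fin d))) [IsProbabilityMeasure μ]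
    (hac : μ ≪ volume) {v : EuclideanSpace ℝ (Fin d)} (hv : v ≠ 0) :
    ContinuousAt (fval μ) v := by
  rw [Metric.continuousAt_iff]
  intro ε hε
  set A : ℕ → Set (EuclideanSpace ℝ (Fin d)) :=
    fun n => {θ | ((n : ℝ) + 1)⁻¹ * ‖θ‖ < ⟪θ, v⟫} with hA
  set B : ℕ → Set (EuclideanSpace ℝ (Fin d)) :=
    fun n => {θ | -(((n : ℝ) + 1)⁻¹ * ‖θ‖) ≤ ⟪θ, v⟫} with hB
  have hcoef : ∀ m n : ℕ, m ≤ n → ((n : ℝ) + 1)⁻¹ ≤ ((m : ℝ) + 1)⁻¹ := by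
    intro m n hmn
    apply inv_anti₀ (by positivity)
    have : (m : ℝ) ≤ n := Nat.cast_le.mpr hmn
    linarith
  have hAmono : Monotone A := by
    intro m n hmn θ hθ
    have h1 : ((n : ℝ) + 1)⁻¹ * ‖θ‖ ≤ ((m : ℝ) + 1)⁻¹ * ‖θ‖ :=
      mul_le_mul_of_nonneg_right (hcoef m n hmn) (norm_nonneg θ)
    exact lt_of_le_of_lt h1 hθ
  have hBanti : Antitone B := by
    intro m n hmn θ hθ
    have h1 : ((n : ℝ) + 1)⁻¹ * ‖θ‖ ≤ ((m : ℝ) + 1)⁻¹ * ‖θ‖ :=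
      mul_le_mul_of_nonneg_right (hcoef m n hmn) (norm_nonneg θ)
    simp only [hB, mem_setOf_eq] at hθ ⊢
    linarith
  have hUA : ⋃ n, A n = {θ | 0 < ⟪θ, v⟫} := by
    ext θ
    simp only [mem_iUnion, hA, mem_setOf_eq]
    constructor
    · rintro ⟨n, hn⟩
      have : (0:ℝ) ≤ ((n : ℝ) + 1)⁻¹ * ‖θ‖ := by positivity
      linarith
    · intro hp
      obtain ⟨n, hn⟩ := exists_nat_gt (‖θ‖ / ⟪θ, v⟫)
      refine ⟨n, ?_⟩
      have h1 : ‖θ‖ < ((n : ℝ) + 1) * ⟪θ, v⟫ := by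
        have := (div_lt_iff₀ hp).mp (lt_trans hn (lt_add_one _))
        linarith
      have h2 : (0:ℝ) < (n : ℝ) + 1 := by positivity
      rw [inv_mul_lt_iff₀ h2]
      exact h1
  have hIB : ⋂ n, B n = {θ | 0 ≤ ⟪θ, v⟫} := by
    ext θ
    simp only [mem_iInter, hB, mem_setOf_eq]
    constructor
    · intro hall
      by_contra hneg
      push_neg at hneg
      obtain ⟨n, hn⟩ := exists_nat_gt (‖θ‖ / (-⟪θ, v⟫))
      have hp : (0:ℝ) < -⟪θ, v⟫ := by linarith
      have h1 : ‖θ‖ < ((n : ℝ) + 1) * (-⟪θ, v⟫) := by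
        have := (div_lt_iff₀ hp).mp (lt_trans hn (lt_add_one _))
        linarith
      have h2 := hall n
      have h3 : (0:ℝ) < (n : ℝ) + 1 := by positivity
      have h4 : ((n : ℝ) + 1)⁻¹ * ‖θ‖ < -⟪θ, v⟫ := by
        rw [inv_mul_lt_iff₀ h3]; exact h1
      linarith
    · intro h n
      have : (0:ℝ) ≤ ((n : ℝ) + 1)⁻¹ * ‖θ‖ := by positivity
      linarith
  have hBmeas : ∀ n, MeasurableSet (B n) := by
    intro n
    exact (isClosed_le (continuous_const.mul continuous_norm).neg (cont_inner v)).measurableSet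
  have hU : Tendsto (fun n => μ (A n)) atTop (𝓝 (μ {θ | 0 ≤ ⟪θ, v⟫})) := by
    have := tendsto_measure_iUnion_atTop (μ := μ) hAmono
    rwa [hUA, measure_strict_eq μ hac hv] at this
  have hI : Tendsto (fun n => μ (B n)) atTop (𝓝 (μ {θ | 0 ≤ ⟪θ, v⟫})) := by
    have := tendsto_measure_iInter_atTop (μ := μ)
      (fun n => (hBmeas n).nullMeasurableSet) hBanti ⟨0, measure_ne_top μ _⟩
    rwa [hIB] at this
  have hUr : Tendsto (fun n => (μ (A n)).toReal) atTop (𝓝 (fval μ v)) :=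
    (ENNReal.tendsto_toReal (measure_ne_top μ _)).comp hU
  have hIr : Tendsto (fun n => (μ (B n)).toReal) atTop (𝓝 (fval μ v)) :=
    (ENNReal.tendsto_toReal (measure_ne_top μ _)).comp hI
  have hev : ∀ᶠ n in atTop, fval μ v - ε / 2 < (μ (A n)).toReal ∧
      (μ (B n)).toReal < fval μ v + ε / 2 :=
    (hUr.eventually (eventually_gt_nhds (by linarith))).and
      (hIr.eventually (eventually_lt_nhds (by linarith)))
  obtain ⟨n, hnA, hnB⟩ := hev.exists
  refine ⟨((n : ℝ) + 1)⁻¹, by positivity, ?_⟩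
  intro w hw
  have hd : ‖w - v‖ ≤ ((n : ℝ) + 1)⁻¹ := le_of_lt (by rwa [dist_eq_norm] at hw)
  have hsub1 : A n ⊆ {θ | 0 ≤ ⟪θ, w⟫} := by
    intro θ hθ
    simp only [hA, mem_setOf_eq] at hθ ⊢
    have habs : |⟪θ, w - v⟫| ≤ ‖θ‖ * ‖w - v‖ := abs_real_inner_le_norm θ (w - v)
    have h1 : -(‖θ‖ * ‖w - v‖) ≤ ⟪θ, w - v⟫ := neg_le_of_abs_le habs
    have h2 : ‖θ‖ * ‖w - v‖ ≤ ‖θ‖ * ((n : ℝ) + 1)⁻¹ :=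
      mul_le_mul_of_nonneg_left hd (norm_nonneg θ)
    have h3 : ⟪θ, w - v⟫ = ⟪θ, w⟫ - ⟪θ, v⟫ := inner_sub_right θ w v
    have h4 : ((n : ℝ) + 1)⁻¹ * ‖θ‖ = ‖θ‖ * ((n : ℝ) + 1)⁻¹ := mul_comm _ _
    rw [h4] at hθ
    linarith
  have hsub2 : {θ : EuclideanSpace ℝ (Fin d) | 0 ≤ ⟪θ, w⟫} ⊆ B n := by
    intro θ hθ
    simp only [hB, mem_setOf_eq] at hθ ⊢
    have habs : |⟪θ, w - v⟫| ≤ ‖θ‖ * ‖w - v‖ := abs_real_inner_le_norm θ (w - v)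
    have h1 : ⟪θ, w - v⟫ ≤ ‖θ‖ * ‖w - v‖ := le_of_abs_le habs
    have h2 : ‖θ‖ * ‖w - v‖ ≤ ‖θ‖ * ((n : ℝ) + 1)⁻¹ :=
      mul_le_mul_of_nonneg_left hd (norm_nonneg θ)
    have h3 : ⟪θ, w - v⟫ = ⟪θ, w⟫ - ⟪θ, v⟫ := inner_sub_right θ w v
    have h5 : (0:ℝ) ≤ ⟪θ, w⟫ := hθ
    have h4 : ((n : ℝ) + 1)⁻¹ * ‖θ‖ = ‖θ‖ * ((n : ℝ) + 1)⁻¹ := mul_comm _ _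
    rw [h4]
    linarith
  have hl : (μ (A n)).toReal ≤ fval μ w :=
    ENNReal.toReal_mono (measure_ne_top μ _) (measure_mono hsub1)
  have hr : fval μ w ≤ (μ (B n)).toReal :=
    ENNReal.toReal_mono (measure_ne_top μ _) (measure_mono hsub2)
  rw [Real.dist_eq, abs_sub_lt_iff]
  constructor <;> linarith

lemma depthSet_eq (μ : Measure (EuclideanSpace ℝ (Fin d))) :
    {r | ∃ v : EuclideanSpace ℝ (Fin d), v ≠ 0 ∧
      r = (μ {θ | 0 ≤ ⟪θ, v⟫}).toReal} = fval μ '' (sphere (0 : EuclideanSpace ℝ (Fin d)) 1) := by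
  ext r
  simp only [mem_setOf_eq, mem_image, mem_sphere_iff_norm, sub_zero]
  constructor
  · rintro ⟨v, hv, rfl⟩
    refine ⟨‖v‖⁻¹ • v, ?_, ?_⟩
    · rw [norm_smul, norm_inv, norm_norm, inv_mul_cancel₀ (norm_ne_zero_iff.mpr hv)]
    · rw [fval_smul μ (inv_pos.mpr (norm_pos_iff.mpr hv)) v]; rfl
  · rintro ⟨w, hw, rfl⟩
    exact ⟨w, fun h => by simp [h] at hw, rfl⟩

/-- for a pairwise comparison, a pair (x₁, x₂) of alternatives in X
realizing the predictive distribution (u₁, u₂) with u₁, u₂ > 0 exists if and only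
if max(u₁, u₂) ≤ 1 − δ(μ). -/
theorem pairwise_question_iff_depth {d : ℕ} (hd : 2 ≤ d)
    (μ : Measure (EuclideanSpace ℝ (Fin d))) [IsProbabilityMeasure μ]
    (hac : μ ≪ volume)
    (X : Set (EuclideanSpace ℝ (Fin d))) (hX : (interior X).Nonempty)
    (u₁ u₂ : ℝ) (hu₁ : 0 < u₁) (hu₂ : 0 < u₂) (hsum : u₁ + u₂ = 1) :
    (∃ x₁ ∈ X, ∃ x₂ ∈ X,
        (μ {θ | ⟪θ, x₂⟫ ≤ ⟪θ, x₁⟫}).toReal = u₁ ∧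
        (μ {θ | ⟪θ, x₁⟫ < ⟪θ, x₂⟫}).toReal = u₂) ↔
      max u₁ u₂ ≤ 1 - depth μ := by
  -- setup: sphere minimum and depth characterization
  have hSne : (sphere (0 : EuclideanSpace ℝ (Fin d)) 1).Nonempty := by
    refine ⟨EuclideanSpace.single (⟨0, by omega⟩ : Fin d) (1 : ℝ), ?_⟩
    rw [mem_sphere_iff_norm, sub_zero, EuclideanSpace.norm_single, norm_one]
  have hScont : ContinuousOn (fval μ) (sphere (0 : EuclideanSpace ℝ (Fin d)) 1) := fun w hw =>
    (fval_continuousAt μ hac (by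
      intro h
      rw [mem_sphere_iff_norm, sub_zero, h] at hw
      simp at hw)).continuousWithinAt
  obtain ⟨w₀, hw₀S, hw₀min'⟩ :=
    IsCompact.exists_isMinOn (isCompact_sphere (0 : EuclideanSpace ℝ (Fin d)) 1) hSne hScont
  have hw₀min : ∀ w ∈ sphere (0 : EuclideanSpace ℝ (Fin d)) 1, fval μ w₀ ≤ fval μ w :=
    fun w hw => hw₀min' hw
  have hw₀ : w₀ ≠ 0 := by
    intro h
    rw [mem_sphere_iff_norm, sub_zero, h] at hw₀S
    simp at hw₀S
  have hdepth : depth μ = fval μ w₀ := by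
    rw [depth, depthSet_eq μ]
    exact IsLeast.csInf_eq ⟨⟨w₀, hw₀S, rfl⟩, by rintro r ⟨w, hwS, rfl⟩; exact hw₀min w hwS⟩
  have hdepth_le : ∀ v : EuclideanSpace ℝ (Fin d), v ≠ 0 → depth μ ≤ fval μ v := by
    intro v hv
    have : fval μ v ∈ fval μ '' (sphere (0 : EuclideanSpace ℝ (Fin d)) 1) := by
      rw [← depthSet_eq μ]; exact ⟨v, hv, rfl⟩
    obtain ⟨w, hwS, hwe⟩ := this
    rw [hdepth, ← hwe]
    exact hw₀min w hwS
  constructor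
  · rintro ⟨x₁, hx₁, x₂, hx₂, h1, h2⟩
    set v := x₁ - x₂ with hvdef
    have hset1 : {θ : EuclideanSpace ℝ (Fin d) | ⟪θ, x₂⟫ ≤ ⟪θ, x₁⟫} = {θ | 0 ≤ ⟪θ, v⟫} := by
      ext θ
      rw [mem_setOf_eq, mem_setOf_eq, hvdef, inner_sub_right, sub_nonneg]
    have hv : v ≠ 0 := by
      intro h
      have hx : x₁ = x₂ := by rwa [hvdef, sub_eq_zero] at h
      rw [hx] at h2
      simp at h2
      linarith
    have hu1 : fval μ v = u₁ := by rw [fval, ← hset1, h1]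
    have hA := hdepth_le v hv
    have hB := hdepth_le (-v) (neg_ne_zero.mpr hv)
    have hC := fval_add_neg μ hac hv
    rw [hu1] at hA hC
    apply max_le <;> linarith
  · intro h
    have hrank : (1 : Cardinal) < Module.rank ℝ (EuclideanSpace ℝ (Fin d)) := by
      rw [← Module.finrank_eq_rank, finrank_euclideanSpace_fin]
      exact_mod_cast by omega
    have hconn : IsPreconnected (sphere (0 : EuclideanSpace ℝ (Fin d)) 1) :=
      isPreconnected_sphere hrank 0 1
    have hmw₀ : -w₀ ∈ sphere (0 : EuclideanSpace ℝ (Fin d)) 1 := by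
      rw [mem_sphere_iff_norm, sub_zero, norm_neg]
      rwa [mem_sphere_iff_norm, sub_zero] at hw₀S
    have hnegval : fval μ (-w₀) = 1 - fval μ w₀ := by
      have := fval_add_neg μ hac hw₀
      linarith
    have hu₁mem : u₁ ∈ Icc (fval μ w₀) (fval μ (-w₀)) := by
      rw [hnegval, ← hdepth]
      constructor
      · have : u₂ ≤ 1 - depth μ := le_trans (le_max_right _ _) h
        linarith
      · have : u₁ ≤ 1 - depth μ := le_trans (le_max_left _ _) h
        linarith
    obtain ⟨w, hwS, hwu⟩ := hconn.intermediate_value hw₀S hmw₀ hScont hu₁mem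
    -- build points in X
    obtain ⟨x₀, hx₀⟩ := hX
    obtain ⟨ε, hε, hball⟩ := Metric.isOpen_iff.mp isOpen_interior x₀ hx₀
    have hwnorm : ‖w‖ = 1 := by rwa [mem_sphere_iff_norm, sub_zero] at hwS
    set x₁ : EuclideanSpace ℝ (Fin d) := x₀ + (ε / 2) • w with hx₁def
    have hx₁X : x₁ ∈ X := by
      apply interior_subset
      apply hball
      rw [mem_ball_iff_norm, hx₁def, add_sub_cancel_left, norm_smul, hwnorm, mul_one,
        Real.norm_eq_abs, abs_of_pos (by linarith : (0:ℝ) < ε / 2)]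
      linarith
    have hx₀X : x₀ ∈ X := interior_subset hx₀
    refine ⟨x₁, hx₁X, x₀, hx₀X, ?_, ?_⟩
    · have hset : {θ : EuclideanSpace ℝ (Fin d) | ⟪θ, x₀⟫ ≤ ⟪θ, x₁⟫} = {θ | 0 ≤ ⟪θ, w⟫} := by
        ext θ
        rw [mem_setOf_eq, mem_setOf_eq, hx₁def, inner_add_right, le_add_iff_nonneg_right,
          real_inner_smul_right]
        exact mul_nonneg_iff_of_pos_left (by linarith)
      rw [hset]
      exact hwu
    · have hset : {θ : EuclideanSpace ℝ (Fin d) | ⟪θ, x₁⟫ < ⟪θ, x₀⟫}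
          = {θ : EuclideanSpace ℝ (Fin d) | 0 ≤ ⟪θ, w⟫}ᶜ := by
        ext θ
        rw [mem_compl_iff, mem_setOf_eq, mem_setOf_eq, hx₁def, inner_add_right,
          real_inner_smul_right, not_le]
        constructor
        · intro hlt
          nlinarith
        · intro hlt
          nlinarith
      rw [hset, measure_compl (measurableSet_H w) (measure_ne_top μ _), measure_univ,
        ENNReal.toReal_sub_of_le prob_le_one ENNReal.one_ne_top, ENNReal.toReal_one]
      have : (μ {θ : EuclideanSpace ℝ (Fin d) | 0 ≤ ⟪θ, w⟫}).toReal = u₁ := hwu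
      rw [this]
      linarith
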